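/- arXiv:math/9409213 — 8 statements merged into one kernel-verified Lean document; each statement's English description precedes it below -/
import Mathlib

section
/- If S_1, ..., S_m are pairwise disjoint subsets of a finite set V, then there exists a permutation π of V with π(S_i) ∩ S_i = ∅ for every i if and only if |S_i| ≤ |V|/2 for every i = 1, ..., m. -/
/-- For pairwise disjoint subsets `S₁,…,Sₘ` of a finite set `V`, the collection is
invertible by a single permutation iff every `Sᵢ` has at most `|V|/2` elements. -/
theorem stmt1 {V : Type*} [Fintype V] [DecidableEq V] {m : ℕ} (S : Fin m → Finset V)
    (hdisj : ∀ i j : Fin m, i ≠ j → Disjoint (S i) (S j)) :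
    (∃ π : Equiv.Perm V, ∀ i : Fin m, Disjoint ((S i).image π) (S i)) ↔
    (∀ i : Fin m, 2 * (S i).card ≤ Fintype.card V) := by
  constructor
  · rintro ⟨π, hπ⟩ i
    have hcard : ((S i).image π).card = (S i).card :=
      Finset.card_image_of_injective _ π.injective
    have := Finset.card_union_of_disjoint (hπ i)
    have hle : ((S i).image π ∪ S i).card ≤ Fintype.card V :=
      (Finset.card_le_card (Finset.subset_univ _)).trans_eq (Finset.card_univ)
    omega
  · intro hcard
    -- target sets for Hall's theorem
    set r : V → Finset V :=
      fun v => Finset.univ \ ((Finset.univ.filter fun i => v ∈ S i).biUnion S) with hr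
    have hr_sub : ∀ i : Fin m, ∀ v ∈ S i, r v ⊆ (S i)ᶜ := by
      intro i v hv x hx
      rw [hr, Finset.mem_sdiff] at hx
      rw [Finset.mem_compl]
      intro hxS
      exact hx.2 (Finset.mem_biUnion.mpr ⟨i, Finset.mem_filter.mpr ⟨Finset.mem_univ _, hv⟩, hxS⟩)
    have hr_sup : ∀ i : Fin m, ∀ v ∈ S i, (S i)ᶜ ⊆ r v := by
      intro i v hv x hx
      rw [Finset.mem_compl] at hx
      rw [hr, Finset.mem_sdiff]
      refine ⟨Finset.mem_univ _, fun hmem => ?_⟩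
      obtain ⟨j, hj, hxj⟩ := Finset.mem_biUnion.mp hmem
      have hvj : v ∈ S j := (Finset.mem_filter.mp hj).2
      rcases eq_or_ne j i with rfl | hne
      · exact hx hxj
      · exact Finset.disjoint_left.mp (hdisj j i hne) hvj hv
    have hall : ∀ A : Finset V, A.card ≤ (A.biUnion r).card := by
      intro A
      by_cases hfree : ∃ v ∈ A, ∀ i : Fin m, v ∉ S i
      · obtain ⟨v, hvA, hv⟩ := hfree
        have : r v = Finset.univ := by
          rw [hr]
          have : (Finset.univ.filter fun i => v ∈ S i) = ∅ := by
            apply Finset.filter_false_of_mem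
            intro i _
            exact hv i
          simp [this]
        have hsub : Finset.univ ⊆ A.biUnion r := by
          rw [← this]
          exact Finset.subset_biUnion_of_mem r hvA
        calc A.card ≤ Fintype.card V := Finset.card_le_univ A
          _ = Finset.univ.card := (Finset.card_univ).symm
          _ ≤ (A.biUnion r).card := Finset.card_le_card hsub
      · push_neg at hfree
        rcases A.eq_empty_or_nonempty with rfl | ⟨v0, hv0⟩
        · simp
        obtain ⟨i, hi⟩ := hfree v0 hv0
        by_cases hAi : A ⊆ S i
        · have h1 : (S i)ᶜ ⊆ A.biUnion r :=
            (hr_sup i v0 hi).trans (Finset.subset_biUnion_of_mem r hv0)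
          have h2 : (S i)ᶜ.card = Fintype.card V - (S i).card := by
            rw [Finset.card_compl]
          have := hcard i
          have hA : A.card ≤ (S i).card := Finset.card_le_card hAi
          have h3 : (S i)ᶜ.card ≤ (A.biUnion r).card := Finset.card_le_card h1
          omega
        · obtain ⟨w, hwA, hwi⟩ := Finset.not_subset.mp hAi
          obtain ⟨j, hj⟩ := hfree w hwA
          have hne : j ≠ i := fun h => hwi (h ▸ hj)
          have hsub : Finset.univ ⊆ A.biUnion r := by
            intro x _
            by_cases hx : x ∈ S i
            · exact Finset.mem_biUnion.mpr ⟨w, hwA, hr_sup j w hj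
                (Finset.mem_compl.mpr fun hxj => Finset.disjoint_left.mp (hdisj j i hne) hxj hx)⟩
            · exact Finset.mem_biUnion.mpr ⟨v0, hv0, hr_sup i v0 hi (Finset.mem_compl.mpr hx)⟩
          calc A.card ≤ Fintype.card V := Finset.card_le_univ A
            _ = Finset.univ.card := (Finset.card_univ).symm
            _ ≤ (A.biUnion r).card := Finset.card_le_card hsub
    obtain ⟨f, hfinj, hfr⟩ := (Finset.all_card_le_biUnion_card_iff_exists_injective r).mp hall
    refine ⟨Equiv.ofBijective f ((Fintype.bijective_iff_injective_and_card f).mpr ⟨hfinj, rfl⟩), ?_⟩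
    intro i
    rw [Finset.disjoint_left]
    rintro x hx
    obtain ⟨v, hv, rfl⟩ := Finset.mem_image.mp hx
    have : f v ∈ (S i)ᶜ := hr_sub i v hv (hfr v)
    simpa using Finset.mem_compl.mp this
end

section
/- Let |S_1| = |S_2| = |S_3| = k be subsets of a finite set V of size n. If there exists a permutation π of V inverting all three sets, then |S_1 ∩ S_2 ∩ S_3| ≤ |S̄_1 ∩ S̄_2 ∩ S̄_3| ≤ |S_1 ∩ S_2 ∩ S_3| + (3/2)(n − 2k), where S̄_i = V \ S_i. -/
/-- If three `k`-subsets `S₁,S₂,S₃` of an `n`-set `V` are simultaneously invertible,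
then `|S₁∩S₂∩S₃| ≤ |S̄₁∩S̄₂∩S̄₃| ≤ |S₁∩S₂∩S₃| + (3/2)(n−2k)`. -/
theorem stmt5 {V : Type*} [Fintype V] [DecidableEq V] {n k : ℕ}
    (hV : Fintype.card V = n) (S₁ S₂ S₃ : Finset V)
    (h₁ : S₁.card = k) (h₂ : S₂.card = k) (h₃ : S₃.card = k)
    (π : Equiv.Perm V)
    (hπ₁ : Disjoint (S₁.image π) S₁) (hπ₂ : Disjoint (S₂.image π) S₂)
    (hπ₃ : Disjoint (S₃.image π) S₃) :
    (S₁ ∩ S₂ ∩ S₃).card ≤ (S₁ᶜ ∩ S₂ᶜ ∩ S₃ᶜ).card ∧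
    ((S₁ᶜ ∩ S₂ᶜ ∩ S₃ᶜ).card : ℝ) ≤ (S₁ ∩ S₂ ∩ S₃).card + (3 / 2) * ((n : ℝ) - 2 * k) := by
  set A := S₁ ∩ S₂ ∩ S₃ with hAdef
  set B := S₁ᶜ ∩ S₂ᶜ ∩ S₃ᶜ with hBdef
  set D := (S₁ ∩ S₂) ∪ (S₁ ∩ S₃) ∪ (S₂ ∩ S₃) with hDdef
  have g₁ : ∀ x, x ∈ S₁ → π x ∉ S₁ := fun x hx =>
    Finset.disjoint_left.mp hπ₁ (Finset.mem_image_of_mem π hx)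
  have g₂ : ∀ x, x ∈ S₂ → π x ∉ S₂ := fun x hx =>
    Finset.disjoint_left.mp hπ₂ (Finset.mem_image_of_mem π hx)
  have g₃ : ∀ x, x ∈ S₃ → π x ∉ S₃ := fun x hx =>
    Finset.disjoint_left.mp hπ₃ (Finset.mem_image_of_mem π hx)
  -- first inequality : π maps A into B
  have hAB : A.card ≤ B.card := by
    have himg : A.image π ⊆ B := by
      intro y hy
      obtain ⟨x, hx, rfl⟩ := Finset.mem_image.mp hy
      simp only [hAdef, Finset.mem_inter] at hx
      simp only [hBdef, Finset.mem_inter, Finset.mem_compl]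
      exact ⟨⟨g₁ x hx.1.1, g₂ x hx.1.2⟩, g₃ x hx.2⟩
    calc A.card = (A.image π).card := (Finset.card_image_of_injective _ π.injective).symm
      _ ≤ B.card := Finset.card_le_card himg
  -- π maps D off itself, so 2|D| ≤ n
  have hDdisj : Disjoint (D.image π) D := by
    rw [Finset.disjoint_left]
    intro y hy hyD
    obtain ⟨x, hx, rfl⟩ := Finset.mem_image.mp hy
    simp only [hDdef, Finset.mem_union, Finset.mem_inter] at hx hyD
    rcases hx with (⟨hx1, hx2⟩ | ⟨hx1, hx3⟩) | ⟨hx2, hx3⟩ <;>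
      [(have := g₁ x hx1; have := g₂ x hx2);
       (have := g₁ x hx1; have := g₃ x hx3);
       (have := g₂ x hx2; have := g₃ x hx3)] <;> tauto
  have hD2 : 2 * D.card ≤ n := by
    have := Finset.card_union_of_disjoint hDdisj
    have hle : (D.image π ∪ D).card ≤ n := by
      rw [← hV]; exact Finset.card_le_univ _
    rw [this, Finset.card_image_of_injective _ π.injective] at hle
    omega
  -- counting identity: |B| + |S₁| + |S₂| + |S₃| = n + |D| + |A|
  have cardsum : ∀ T : Finset V, T.card = ∑ x : V, (if x ∈ T then 1 else 0) := by
    intro T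
    rw [Finset.sum_ite_mem, Finset.univ_inter, Finset.card_eq_sum_ones]
  have hid : B.card + (S₁.card + S₂.card + S₃.card) = n + D.card + A.card := by
    rw [cardsum B, cardsum S₁, cardsum S₂, cardsum S₃, cardsum D, cardsum A, ← hV,
      Fintype.card_eq_sum_ones, ← Finset.sum_add_distrib, ← Finset.sum_add_distrib,
      ← Finset.sum_add_distrib, ← Finset.sum_add_distrib, ← Finset.sum_add_distrib]
    apply Finset.sum_congr rfl
    intro x _
    by_cases hx1 : x ∈ S₁ <;> by_cases hx2 : x ∈ S₂ <;> by_cases hx3 : x ∈ S₃ <;>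
      simp [hAdef, hBdef, hDdef, Finset.mem_inter, Finset.mem_compl, Finset.mem_union,
        hx1, hx2, hx3]
  refine ⟨hAB, ?_⟩
  rw [h₁, h₂, h₃] at hid
  have hid' : (B.card : ℝ) + (k + k + k) = n + D.card + A.card := by
    exact_mod_cast congrArg (Nat.cast : ℕ → ℝ) hid
  have hD2' : 2 * (D.card : ℝ) ≤ n := by exact_mod_cast hD2
  linarith
end

section
/- Let V be an n-element set and S ⊆ V with |S| = i ≤ n/2. Then the number of simple permutations of V that invert S (i.e., π(S) ∩ S = ∅) equals (n − i)! / (2^⌊n/2 − i⌋ · ⌊n/2 − i⌋!). -/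
open Equiv Equiv.Perm Finset
set_option linter.unusedSectionVars false
set_option linter.unusedVariables false

namespace Stmt7Aux

lemma natcard_sigma {β : Type} [Fintype β] (B : β → Type) [∀ b, Finite (B b)] :
    Nat.card (Σ b, B b) = ∑ b, Nat.card (B b) := by
  classical
  haveI : ∀ b, Fintype (B b) := fun b => Fintype.ofFinite _
  simp [Nat.card_eq_fintype_card, Fintype.card_sigma]

lemma natcard_fiber_sum {α β : Type} [Finite α] [Fintype β] (P : α → Prop) (f : α → β) :
    Nat.card {a // P a} = ∑ b : β, Nat.card {a // P a ∧ f a = b} := by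
  classical
  rw [← Nat.card_congr (Equiv.sigmaFiberEquiv (fun x : {a // P a} => f x.1)),
    natcard_sigma]
  exact Finset.sum_congr rfl fun b _ =>
    Nat.card_congr (Equiv.subtypeSubtypeEquivSubtypeInter P (fun a => f a = b))


variable {V : Type} [Fintype V] [DecidableEq V]

section Fiber

variable (S : Finset V) (a t : V)

lemma inv_apply_eq {π : Perm V} (hπ : ∀ x, π (π x) = x) {y z : V} :
    π y = z ↔ y = π z :=
  ⟨fun h => by rw [← h, hπ], fun h => by rw [h, hπ]⟩

/-- Restriction condition for `subtypePerm`. -/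
lemma restrict_cond {π : Perm V} (hπ : ∀ x, π (π x) = x) (hat : π a = t) :
    ∀ y, (y ≠ a ∧ y ≠ t) ↔ (π y ≠ a ∧ π y ≠ t) := by
  intro y
  have hta : π t = a := by rw [← hat, hπ]
  have h1 : π y = a ↔ y = t := by rw [inv_apply_eq hπ, hat]
  have h2 : π y = t ↔ y = a := by rw [inv_apply_eq hπ, hta]
  constructor
  · rintro ⟨h, h'⟩; exact ⟨fun hh => h' (h1.mp hh), fun hh => h (h2.mp hh)⟩
  · rintro ⟨h, h'⟩; exact ⟨fun hh => h' (h2.mpr hh), fun hh => h (h1.mpr hh)⟩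

/-- The extension of a permutation of the subtype by the swap of `a` and `t`. -/
noncomputable def ext0 (σ : Perm {y : V // y ≠ a ∧ y ≠ t}) : Perm V :=
  Equiv.swap a t * Equiv.Perm.ofSubtype σ

lemma ext0_apply_a (σ : Perm {y : V // y ≠ a ∧ y ≠ t}) (hat : a ≠ t) : ext0 a t σ a = t := by
  simp [ext0, Equiv.Perm.ofSubtype_apply_of_not_mem (p := fun y => y ≠ a ∧ y ≠ t) σ
    (by simp : ¬(a ≠ a ∧ a ≠ t))]

lemma ext0_apply_t (σ : Perm {y : V // y ≠ a ∧ y ≠ t}) (hat : a ≠ t) : ext0 a t σ t = a := by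
  simp [ext0, Equiv.Perm.ofSubtype_apply_of_not_mem (p := fun y => y ≠ a ∧ y ≠ t) σ
    (by simp : ¬(t ≠ a ∧ t ≠ t))]

lemma ext0_apply_mem (σ : Perm {y : V // y ≠ a ∧ y ≠ t}) {x : V} (hx : x ≠ a ∧ x ≠ t) :
    ext0 a t σ x = (σ ⟨x, hx⟩ : V) := by
  have h := Equiv.Perm.ofSubtype_apply_of_mem (p := fun y => y ≠ a ∧ y ≠ t) σ hx
  simp only [ext0, Equiv.Perm.coe_mul, Function.comp_apply, h]
  exact Equiv.swap_apply_of_ne_of_ne (σ ⟨x, hx⟩).2.1 (σ ⟨x, hx⟩).2.2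

lemma ext0_inv (σ : Perm {y : V // y ≠ a ∧ y ≠ t}) (hat : a ≠ t)
    (hσ : ∀ x, σ (σ x) = x) : ∀ x, ext0 a t σ (ext0 a t σ x) = x := by
  intro x
  by_cases hxa : x = a
  · rw [hxa, ext0_apply_a _ _ _ hat, ext0_apply_t _ _ _ hat]
  by_cases hxt : x = t
  · rw [hxt, ext0_apply_t _ _ _ hat, ext0_apply_a _ _ _ hat]
  · rw [ext0_apply_mem a t σ ⟨hxa, hxt⟩, ext0_apply_mem a t σ (σ ⟨x, _⟩).2]
    have := hσ ⟨x, ⟨hxa, hxt⟩⟩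
    rw [show (⟨(σ ⟨x, ⟨hxa, hxt⟩⟩ : V), (σ ⟨x, ⟨hxa, hxt⟩⟩).2⟩ :
        {y : V // y ≠ a ∧ y ≠ t}) = σ ⟨x, ⟨hxa, hxt⟩⟩ from rfl, this]

end Fiber

end Stmt7Aux

namespace Stmt7Aux

variable {V : Type} [Fintype V] [DecidableEq V]

section Fiber2

variable (S : Finset V) (a t : V)

lemma subtypePerm_ext0 (σ : Perm {y : V // y ≠ a ∧ y ≠ t})
    (h : ∀ y, (y ≠ a ∧ y ≠ t) ↔ (ext0 a t σ y ≠ a ∧ ext0 a t σ y ≠ t)) :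
    (ext0 a t σ).subtypePerm (fun y => (h y).symm) = σ := by
  apply Equiv.ext
  intro x
  apply Subtype.ext
  rw [Equiv.Perm.subtypePerm_apply]
  exact ext0_apply_mem a t σ x.2

noncomputable def fixedEquiv (π : Perm V) (hπ : ∀ x, π (π x) = x) (hpa : π a = t)
    (hat : a ≠ t) :
    {x : V // π x = x} ≃
      {x : {y : V // y ≠ a ∧ y ≠ t} // π.subtypePerm (fun y => (restrict_cond a t hπ hpa y).symm) x = x} where
  toFun x := ⟨⟨x.1, by
      intro h
      exact hat ((hpa ▸ (h ▸ x.2 : π a = a)).symm)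
      , by
      intro h
      have hta : π t = a := by rw [← hpa, hπ]
      exact hat (hta ▸ (h ▸ x.2 : π t = t))⟩, by
    apply Subtype.ext
    rw [Equiv.Perm.subtypePerm_apply]
    exact x.2⟩
  invFun y := ⟨y.1.1, by
    have := Subtype.ext_iff.mp y.2
    rwa [Equiv.Perm.subtypePerm_apply] at this⟩
  left_inv x := Subtype.ext rfl
  right_inv y := Subtype.ext (Subtype.ext rfl)

end Fiber2

end Stmt7Aux

namespace Stmt7Aux

variable {V : Type} [Fintype V] [DecidableEq V]

lemma ext0_subtypePerm (a t : V) (π : Perm V) (hπ : ∀ x, π (π x) = x) (hpa : π a = t)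
    (hat : a ≠ t) (h : ∀ y, (y ≠ a ∧ y ≠ t) ↔ (π y ≠ a ∧ π y ≠ t)) :
    ext0 a t (π.subtypePerm (fun y => (h y).symm)) = π := by
  apply Equiv.ext
  intro y
  by_cases hya : y = a
  · rw [hya, ext0_apply_a _ _ _ hat, hpa]
  by_cases hyt : y = t
  · rw [hyt, ext0_apply_t _ _ _ hat, ← hpa, hπ]
  · rw [ext0_apply_mem a t _ ⟨hya, hyt⟩]
    rfl

noncomputable def fiberEquiv (S : Finset V) (a t : V) (hat : a ≠ t) (ht : t ∉ S) (c : ℕ) :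
    {π : Perm V // (((∀ x, π (π x) = x) ∧ Nat.card {x : V // π x = x} = c) ∧
        Disjoint (S.image π) S) ∧ π a = t} ≃
    {σ : Perm {y : V // y ≠ a ∧ y ≠ t} //
        ((∀ x, σ (σ x) = x) ∧ Nat.card {x // σ x = x} = c) ∧
        Disjoint (((S.erase a).subtype fun y => y ≠ a ∧ y ≠ t).image σ)
          ((S.erase a).subtype fun y => y ≠ a ∧ y ≠ t)} where
  toFun x := ⟨x.1.subtypePerm (fun y => (restrict_cond a t x.2.1.1.1 x.2.2 y).symm), by
    obtain ⟨π, ⟨⟨hπ, hfix⟩, hd⟩, hpa⟩ := x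
    refine ⟨⟨?_, ?_⟩, ?_⟩
    · intro y
      apply Subtype.ext
      simp only [Equiv.Perm.subtypePerm_apply]
      exact hπ y.1
    · exact (Nat.card_congr (fixedEquiv a t π hπ hpa hat)).symm.trans hfix
    · rw [Finset.disjoint_left]
      rintro y hy hyS
      obtain ⟨z, hz, rfl⟩ := Finset.mem_image.mp hy
      rw [Finset.mem_subtype] at hz hyS
      have h1 : π z.1 ∈ S.image π :=
        Finset.mem_image_of_mem _ (Finset.mem_of_mem_erase hz)
      have h2 : π z.1 ∉ S := (Finset.disjoint_left.mp hd) h1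
      exact h2 (Finset.mem_of_mem_erase hyS)⟩
  invFun y := ⟨ext0 a t y.1, by
    obtain ⟨σ, ⟨hσ, hfix⟩, hd⟩ := y
    have hinv := ext0_inv a t σ hat hσ
    have hpa := ext0_apply_a a t σ hat
    refine ⟨⟨⟨hinv, ?_⟩, ?_⟩, hpa⟩
    · rw [Nat.card_congr (fixedEquiv a t (ext0 a t σ) hinv hpa hat),
        subtypePerm_ext0 a t σ (restrict_cond a t hinv hpa)]
      exact hfix
    · rw [Finset.disjoint_left]
      rintro y hy hyS
      obtain ⟨s, hs, rfl⟩ := Finset.mem_image.mp hy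
      by_cases hsa : s = a
      · subst hsa
        rw [hpa] at hyS
        exact ht hyS
      · have hst : s ≠ t := fun h => ht (h ▸ hs)
        rw [ext0_apply_mem a t σ ⟨hsa, hst⟩] at hyS
        have hmem : σ ⟨s, ⟨hsa, hst⟩⟩ ∈
            ((S.erase a).subtype fun y => y ≠ a ∧ y ≠ t).image σ := by
          apply Finset.mem_image_of_mem
          rw [Finset.mem_subtype]
          exact Finset.mem_erase.mpr ⟨hsa, hs⟩
        have hmem2 : σ ⟨s, ⟨hsa, hst⟩⟩ ∈ (S.erase a).subtype fun y => y ≠ a ∧ y ≠ t := by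
          rw [Finset.mem_subtype]
          exact Finset.mem_erase.mpr ⟨(σ ⟨s, ⟨hsa, hst⟩⟩).2.1, hyS⟩
        exact (Finset.disjoint_left.mp hd) hmem hmem2⟩
  left_inv x := Subtype.ext (ext0_subtypePerm a t x.1 x.2.1.1.1 x.2.2 hat (restrict_cond a t x.2.1.1.1 x.2.2))
  right_inv y := Subtype.ext (subtypePerm_ext0 a t y.1 (restrict_cond a t (ext0_inv a t y.1 hat y.2.1.1) (ext0_apply_a a t y.1 hat)))

end Stmt7Aux

namespace Stmt7Aux

variable {V : Type} [Fintype V] [DecidableEq V]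

section Odd

variable (x : V)

lemma restrict_cond1 {π : Perm V} (hπ : ∀ y, π (π y) = y) (hx : π x = x) :
    ∀ y, (y ≠ x) ↔ (π y ≠ x) := by
  intro y
  have : π y = x ↔ y = x := by rw [inv_apply_eq hπ, hx]
  exact (not_congr this).symm

lemma ext1_apply_x (σ : Perm {y : V // y ≠ x}) :
    Equiv.Perm.ofSubtype σ x = x :=
  Equiv.Perm.ofSubtype_apply_of_not_mem (p := fun y => y ≠ x) σ (by simp)

lemma ext1_apply_mem (σ : Perm {y : V // y ≠ x}) {y : V} (hy : y ≠ x) :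
    Equiv.Perm.ofSubtype σ y = (σ ⟨y, hy⟩ : V) :=
  Equiv.Perm.ofSubtype_apply_of_mem (p := fun y => y ≠ x) σ hy

lemma ext1_inv (σ : Perm {y : V // y ≠ x}) (hσ : ∀ z, σ (σ z) = z) :
    ∀ y, Equiv.Perm.ofSubtype σ (Equiv.Perm.ofSubtype σ y) = y := by
  intro y
  by_cases hy : y = x
  · rw [hy, ext1_apply_x, ext1_apply_x]
  · rw [ext1_apply_mem x σ hy, ext1_apply_mem x σ (σ ⟨y, hy⟩).2]
    have := hσ ⟨y, hy⟩
    rw [show (⟨(σ ⟨y, hy⟩ : V), (σ ⟨y, hy⟩).2⟩ : {z : V // z ≠ x}) = σ ⟨y, hy⟩ from rfl, this]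

lemma subtypePerm_ext1 (σ : Perm {y : V // y ≠ x})
    (h : ∀ y, (y ≠ x) ↔ (Equiv.Perm.ofSubtype σ y ≠ x)) :
    (Equiv.Perm.ofSubtype σ).subtypePerm (fun y => (h y).symm) = σ := by
  apply Equiv.ext
  intro z
  apply Subtype.ext
  rw [Equiv.Perm.subtypePerm_apply]
  exact ext1_apply_mem x σ z.2

lemma ext1_subtypePerm (π : Perm V) (hx : π x = x)
    (h : ∀ y, (y ≠ x) ↔ (π y ≠ x)) :
    Equiv.Perm.ofSubtype (π.subtypePerm (p := fun y => y ≠ x) (fun y => (h y).symm)) = π := by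
  apply Equiv.ext
  intro y
  by_cases hy : y = x
  · rw [hy, ext1_apply_x, hx]
  · rw [ext1_apply_mem x _ hy]
    rfl

noncomputable def oddFixEquiv :
    {π : Perm V // (((∀ y, π (π y) = y) ∧ Nat.card {z : V // π z = z} = 1) ∧
        Disjoint ((∅ : Finset V).image π) ∅) ∧ π x = x} ≃
    {σ : Perm {y : V // y ≠ x} //
        ((∀ z, σ (σ z) = z) ∧ Nat.card {z // σ z = z} = 0) ∧
        Disjoint ((∅ : Finset {y : V // y ≠ x}).image σ) ∅} where
  toFun π := ⟨π.1.subtypePerm (fun y => (restrict_cond1 x π.2.1.1.1 π.2.2 y).symm), by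
    obtain ⟨π, ⟨⟨hπ, hfix⟩, -⟩, hx⟩ := π
    refine ⟨⟨?_, ?_⟩, by simp⟩
    · intro z
      apply Subtype.ext
      simp only [Equiv.Perm.subtypePerm_apply]
      exact hπ z.1
    · have hsub : Subsingleton {z : V // π z = z} :=
        (Nat.card_eq_one_iff_unique.mp hfix).1
      rw [Nat.card_eq_zero]
      left
      refine ⟨fun z => ?_⟩
      have : π z.1.1 = z.1.1 := by
        have := Subtype.ext_iff.mp z.2
        rwa [Equiv.Perm.subtypePerm_apply] at this
      have := Subtype.ext_iff.mp (hsub.elim (⟨z.1.1, this⟩ : {z : V // π z = z}) ⟨x, hx⟩)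
      exact z.1.2 this⟩
  invFun σ := ⟨Equiv.Perm.ofSubtype σ.1, by
    obtain ⟨σ, ⟨hσ, hfix⟩, -⟩ := σ
    have hempty : IsEmpty {z // σ z = z} := by
      rcases Nat.card_eq_zero.mp hfix with h | h
      · exact h
      · exact absurd h (by exact fun hh => (Finite.not_infinite (Finite.of_injective
          (fun z : {z // σ z = z} => z.1) (fun u v h => Subtype.ext h))) hh)
    have hx1 : Equiv.Perm.ofSubtype σ x = x := ext1_apply_x x σ
    refine ⟨⟨⟨ext1_inv x σ hσ, ?_⟩, by simp⟩, hx1⟩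
    · have : Subsingleton {z : V // Equiv.Perm.ofSubtype σ z = z} := by
        refine ⟨fun u v => Subtype.ext ?_⟩
        have hu : u.1 = x := by
          by_contra hu
          have := u.2
          rw [ext1_apply_mem x σ hu] at this
          exact hempty.elim ⟨⟨u.1, hu⟩, Subtype.ext this⟩
        have hv : v.1 = x := by
          by_contra hv
          have := v.2
          rw [ext1_apply_mem x σ hv] at this
          exact hempty.elim ⟨⟨v.1, hv⟩, Subtype.ext this⟩
        rw [hu, hv]
      have : Nonempty {z : V // Equiv.Perm.ofSubtype σ z = z} := ⟨⟨x, hx1⟩⟩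
      exact Nat.card_unique⟩
  left_inv π := Subtype.ext (ext1_subtypePerm x π.1 π.2.2 (restrict_cond1 x π.2.1.1.1 π.2.2))
  right_inv σ := Subtype.ext (subtypePerm_ext1 x σ.1
    (restrict_cond1 x (ext1_inv x σ.1 σ.2.1.1) (ext1_apply_x x σ.1)))

end Odd

end Stmt7Aux

namespace Stmt7Aux

variable {V : Type} [Fintype V] [DecidableEq V]

lemma card_ne_ne (a t : V) (hat : a ≠ t) :
    Fintype.card {y : V // y ≠ a ∧ y ≠ t} = Fintype.card V - 2 := by
  rw [Fintype.card_subtype]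
  have h : (univ.filter fun y => y ≠ a ∧ y ≠ t) = univ \ {a, t} := by
    ext y; simp [not_or]
  rw [h, Finset.card_sdiff_of_subset (by simp), Finset.card_univ]
  congr 1
  rw [Finset.card_insert_of_notMem (by simp [hat]), Finset.card_singleton]

lemma card_ne (x : V) : Fintype.card {y : V // y ≠ x} = Fintype.card V - 1 := by
  rw [Fintype.card_subtype]
  have h : (univ.filter fun y => y ≠ x) = univ \ {x} := by ext y; simp
  rw [h, Finset.card_sdiff_of_subset (by simp), Finset.card_univ, Finset.card_singleton]

lemma card_subtype_erase (S : Finset V) (a t : V) (ht : t ∉ S) (ha : a ∈ S) :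
    ((S.erase a).subtype fun y => y ≠ a ∧ y ≠ t).card = S.card - 1 := by
  rw [Finset.card_subtype, Finset.filter_true_of_mem, Finset.card_erase_of_mem ha]
  intro y hy
  exact ⟨Finset.ne_of_mem_erase hy, fun h => ht (h ▸ Finset.mem_of_mem_erase hy)⟩



theorem main (m : ℕ) : ∀ (V : Type) [Fintype V] [DecidableEq V] (S : Finset V),
    Fintype.card V = m → 2 * S.card ≤ m →
    Nat.card {π : Perm V // ((∀ x, π (π x) = x) ∧ Nat.card {x : V // π x = x} = m % 2) ∧
        Disjoint (S.image π) S}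
      * (2 ^ (m / 2 - S.card) * Nat.factorial (m / 2 - S.card)) =
      Nat.factorial (m - S.card) := by
  induction m using Nat.strong_induction_on with
  | _ m IH =>
  intro V _ _ S hV hle
  rcases S.eq_empty_or_nonempty with rfl | ⟨a, ha⟩
  · -- S = ∅
    rcases Nat.eq_zero_or_pos m with rfl | hm
    · -- m = 0
      haveI : IsEmpty V := Fintype.card_eq_zero_iff.mp hV
      have h1 : ∀ π : Perm V, π = 1 := fun π => Equiv.ext fun y => isEmptyElim y
      haveI hne : Nonempty {π : Perm V //
          ((∀ x, π (π x) = x) ∧ Nat.card {x : V // π x = x} = 0 % 2) ∧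
            Disjoint ((∅ : Finset V).image π) ∅} :=
        ⟨⟨1, ⟨⟨fun x => isEmptyElim x, by
          show Nat.card _ = 0
          rw [Nat.card_eq_zero]
          exact Or.inl ⟨fun x => isEmptyElim x.1⟩⟩, by simp⟩⟩⟩
      haveI : Subsingleton {π : Perm V //
          ((∀ x, π (π x) = x) ∧ Nat.card {x : V // π x = x} = 0 % 2) ∧
            Disjoint ((∅ : Finset V).image π) ∅} :=
        ⟨fun u v => Subtype.ext ((h1 u.1).trans (h1 v.1).symm)⟩
      rw [Nat.card_unique]
      simp
    rcases Nat.even_or_odd m with hme | hmo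
    · -- m even, positive
      have hm0 : m % 2 = 0 := Nat.even_iff.mp hme
      obtain ⟨k, rfl⟩ : ∃ k, m = 2 + k := ⟨m - 2, by omega⟩
      have hke : k % 2 = 0 := by omega
      haveI : Nonempty V := Fintype.card_pos_iff.mp (by omega)
      obtain ⟨a⟩ := ‹Nonempty V›
      rw [natcard_fiber_sum _ (fun π : Perm V => π a)]
      rw [← Finset.add_sum_erase univ _ (Finset.mem_univ a)]
      have hza : Nat.card {π : Perm V //
          (((∀ x, π (π x) = x) ∧ Nat.card {x : V // π x = x} = (2 + k) % 2) ∧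
            Disjoint ((∅ : Finset V).image π) ∅) ∧ π a = a} = 0 := by
        rw [Nat.card_eq_zero]
        left
        refine ⟨fun p => ?_⟩
        obtain ⟨π, ⟨⟨hinv, hfix⟩, -⟩, hpa⟩ := p
        have hpos : 0 < Nat.card {x : V // π x = x} := @Nat.card_pos _ ⟨⟨a, hpa⟩⟩ _
        omega
      rw [hza, zero_add, Finset.sum_mul]
      have hterm : ∀ t ∈ univ.erase a, Nat.card {π : Perm V //
          (((∀ x, π (π x) = x) ∧ Nat.card {x : V // π x = x} = (2 + k) % 2) ∧
            Disjoint ((∅ : Finset V).image π) ∅) ∧ π a = t}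
          * (2 ^ ((2 + k) / 2 - (∅ : Finset V).card)
            * Nat.factorial ((2 + k) / 2 - (∅ : Finset V).card)) =
          (k + 2) * Nat.factorial k := by
        intro t ht
        have hta : t ≠ a := (Finset.mem_erase.mp ht).1
        have hat : a ≠ t := hta.symm
        rw [Nat.card_congr (fiberEquiv ∅ a t hat (Finset.notMem_empty t) ((2 + k) % 2))]
        have hemp : ((∅ : Finset V).erase a).subtype (fun y => y ≠ a ∧ y ≠ t) = ∅ := by
          ext y
          simp
        simp only [hemp, Nat.add_mod_left]
        have hV' : Fintype.card {y : V // y ≠ a ∧ y ≠ t} = k := by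
          rw [card_ne_ne a t hat, hV]
          omega
        have hIH := IH k (by omega) {y : V // y ≠ a ∧ y ≠ t} ∅ hV' (by simp)
        simp only [Finset.card_empty, Nat.sub_zero] at hIH ⊢
        have e : (2 + k) / 2 = k / 2 + 1 := by omega
        rw [e, pow_succ, Nat.factorial_succ]
        have e2 : Nat.card {σ : Perm {y : V // y ≠ a ∧ y ≠ t} //
              ((∀ x, σ (σ x) = x) ∧ Nat.card {x // σ x = x} = k % 2) ∧
                Disjoint ((∅ : Finset {y : V // y ≠ a ∧ y ≠ t}).image σ) ∅}
            * (2 ^ (k / 2) * 2 * ((k / 2 + 1) * Nat.factorial (k / 2)))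
            = (Nat.card {σ : Perm {y : V // y ≠ a ∧ y ≠ t} //
              ((∀ x, σ (σ x) = x) ∧ Nat.card {x // σ x = x} = k % 2) ∧
                Disjoint ((∅ : Finset {y : V // y ≠ a ∧ y ≠ t}).image σ) ∅}
            * (2 ^ (k / 2) * Nat.factorial (k / 2))) * (2 * (k / 2 + 1)) := by
          ring
        rw [e2, hIH, show 2 * (k / 2 + 1) = k + 2 by omega, mul_comm]
      rw [Finset.sum_congr rfl hterm, Finset.sum_const,
        Finset.card_erase_of_mem (Finset.mem_univ a), Finset.card_univ, hV, smul_eq_mul]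
      have e3 : 2 + k - (∅ : Finset V).card = (k + 1) + 1 := by simp; omega
      rw [e3, Nat.factorial_succ, Nat.factorial_succ]
      have e4 : 2 + k - 1 = k + 1 := by omega
      rw [e4]
      ring
    · -- m odd
      have hm1 : m % 2 = 1 := Nat.odd_iff.mp hmo
      obtain ⟨k, rfl⟩ : ∃ k, m = k + 1 := ⟨m - 1, by omega⟩
      have hke : k % 2 = 0 := by omega
      haveI : Nonempty V := Fintype.card_pos_iff.mp (by omega)
      simp only [hm1]
      rw [natcard_fiber_sum _ (fun π : Perm V =>
        if h : ∃ x, π x = x then h.choose else Classical.arbitrary V)]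
      rw [Finset.sum_mul]
      have hterm : ∀ x ∈ (univ : Finset V), Nat.card {π : Perm V //
          (((∀ y, π (π y) = y) ∧ Nat.card {z : V // π z = z} = 1) ∧
            Disjoint ((∅ : Finset V).image π) ∅) ∧
            (if h : ∃ z, π z = z then h.choose else Classical.arbitrary V) = x}
          * (2 ^ ((k + 1) / 2 - (∅ : Finset V).card)
            * Nat.factorial ((k + 1) / 2 - (∅ : Finset V).card)) =
          Nat.factorial k := by
        intro x _
        have hiff : ∀ π : Perm V,
            ((((∀ y, π (π y) = y) ∧ Nat.card {z : V // π z = z} = 1) ∧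
              Disjoint ((∅ : Finset V).image π) ∅) ∧
              (if h : ∃ z, π z = z then h.choose else Classical.arbitrary V) = x) ↔
            ((((∀ y, π (π y) = y) ∧ Nat.card {z : V // π z = z} = 1) ∧
              Disjoint ((∅ : Finset V).image π) ∅) ∧ π x = x) := by
          intro π
          constructor
          · rintro ⟨hP, hfp⟩
            obtain ⟨hsub, hne⟩ := Nat.card_eq_one_iff_unique.mp hP.1.2
            obtain ⟨⟨z, hz⟩⟩ := hne
            have hex : ∃ z, π z = z := ⟨z, hz⟩
            rw [dif_pos hex] at hfp
            exact ⟨hP, hfp ▸ hex.choose_spec⟩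
          · rintro ⟨hP, hfp⟩
            obtain ⟨hsub, hne⟩ := Nat.card_eq_one_iff_unique.mp hP.1.2
            have hex : ∃ z, π z = z := ⟨x, hfp⟩
            rw [dif_pos hex]
            exact ⟨hP, Subtype.ext_iff.mp
              (hsub.elim (⟨hex.choose, hex.choose_spec⟩ : {z : V // π z = z}) ⟨x, hfp⟩)⟩
        rw [Nat.card_congr (Equiv.subtypeEquivRight hiff)]
        rw [Nat.card_congr (oddFixEquiv x)]
        have hV' : Fintype.card {y : V // y ≠ x} = k := by
          rw [card_ne x, hV]
          omega
        have hIH := IH k (by omega) {y : V // y ≠ x} ∅ hV' (by simp)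
        simp only [Finset.card_empty, Nat.sub_zero, hke] at hIH ⊢
        have e : (k + 1) / 2 = k / 2 := by omega
        rw [e]
        exact hIH
      rw [Finset.sum_congr rfl hterm, Finset.sum_const, Finset.card_univ, hV, smul_eq_mul]
      simp only [Finset.card_empty, Nat.sub_zero]
      rw [Nat.factorial_succ]
  · -- S nonempty
    have hi1 : 1 ≤ S.card := Finset.card_pos.mpr ⟨a, ha⟩
    have hm2 : 2 ≤ m := le_trans (by omega) hle
    obtain ⟨k, rfl⟩ : ∃ k, m = 2 + k := ⟨m - 2, by omega⟩
    rw [natcard_fiber_sum _ (fun π : Perm V => π a)]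
    rw [← Finset.sum_compl_add_sum S]
    have hzero : ∀ t ∈ S, Nat.card {π : Perm V //
        (((∀ x, π (π x) = x) ∧ Nat.card {x : V // π x = x} = (2 + k) % 2) ∧
          Disjoint (S.image π) S) ∧ π a = t} = 0 := by
      intro t htS
      rw [Nat.card_eq_zero]
      left
      refine ⟨fun p => ?_⟩
      obtain ⟨π, ⟨⟨-, hd⟩, hpa⟩⟩ := p
      exact (Finset.disjoint_left.mp hd (Finset.mem_image_of_mem _ ha)) (hpa ▸ htS)
    rw [Finset.sum_eq_zero hzero, add_zero, Finset.sum_mul]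
    have hterm : ∀ t ∈ Sᶜ, Nat.card {π : Perm V //
        (((∀ x, π (π x) = x) ∧ Nat.card {x : V // π x = x} = (2 + k) % 2) ∧
          Disjoint (S.image π) S) ∧ π a = t}
        * (2 ^ ((2 + k) / 2 - S.card) * Nat.factorial ((2 + k) / 2 - S.card)) =
        Nat.factorial (2 + k - S.card - 1) := by
      intro t ht
      rw [Finset.mem_compl] at ht
      have hat : a ≠ t := fun h => ht (h ▸ ha)
      rw [Nat.card_congr (fiberEquiv S a t hat ht ((2 + k) % 2))]
      have hV' : Fintype.card {y : V // y ≠ a ∧ y ≠ t} = k := by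
        rw [card_ne_ne a t hat, hV]
        omega
      have hS' : ((S.erase a).subtype fun y => y ≠ a ∧ y ≠ t).card = S.card - 1 :=
        card_subtype_erase S a t ht ha
      have hle' : 2 * ((S.erase a).subtype fun y => y ≠ a ∧ y ≠ t).card ≤ k := by
        rw [hS']; omega
      have hIH := IH k (by omega) {y : V // y ≠ a ∧ y ≠ t}
        ((S.erase a).subtype fun y => y ≠ a ∧ y ≠ t) hV' hle'
      rw [hS'] at hIH
      have hmod : (2 + k) % 2 = k % 2 := Nat.add_mod_left 2 k
      rw [hmod]
      have e1 : (2 + k) / 2 - S.card = k / 2 - (S.card - 1) := by omega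
      have e2 : 2 + k - S.card - 1 = k - (S.card - 1) := by omega
      rw [e1, e2]
      exact hIH
    rw [Finset.sum_congr rfl hterm, Finset.sum_const, Finset.card_compl, hV,
      smul_eq_mul]
    have e3 : 2 + k - S.card = (2 + k - S.card - 1) + 1 := by omega
    rw [e3, Nat.factorial_succ, Nat.add_sub_cancel]

end Stmt7Aux


/-- Let `S` be an `i`-subset of an `n`-set with `i ≤ n/2`. The number of simple
permutations (products of `⌊n/2⌋` disjoint transpositions) inverting `S` equals
`(n−i)! / (2^⌊n/2−i⌋ · ⌊n/2−i⌋!)`. -/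
theorem stmt7 (n i : ℕ) (hi : 2 * i ≤ n) (S : Finset (Fin n)) (hS : S.card = i) :
    Nat.card {π : Equiv.Perm (Fin n) //
        ((∀ x, π (π x) = x) ∧ Nat.card {x : Fin n // π x = x} = n % 2) ∧
        Disjoint (S.image π) S} =
      Nat.factorial (n - i) / (2 ^ (n / 2 - i) * Nat.factorial (n / 2 - i)) := by
  have h := Stmt7Aux.main n (Fin n) S (Fintype.card_fin n) (by rw [hS]; exact hi)
  rw [hS] at h
  exact (Nat.div_eq_of_eq_mul_left
    (Nat.mul_pos (pow_pos (by norm_num) _) (Nat.factorial_pos _)) h.symm).symm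
end

section
/- Let S be a collection of subsets of an n-set V containing m_i sets of cardinality i for i = 1, ..., ⌊n/2⌋. Then there exists a permutation π of V inverting at least (⌊n/2⌋!/n!) · Σ_{i=1}^{⌊n/2⌋} (2^i (n−i)! / ⌊n/2 − i⌋!) · m_i of the sets in S. -/
open Finset
section
variable {n : ℕ}

def gval (n j : ℕ) : ℕ :=
  if j < 2 * (n / 2) then (if j % 2 = 0 then j + 1 else j - 1) else j
lemma gval_lt {n j : ℕ} (h : j < n) : gval n j < n := by unfold gval; split_ifs <;> omega
lemma gval_gval {n j : ℕ} (h : j < n) : gval n (gval n j) = j := by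
  unfold gval; split_ifs <;> omega
def tau (n : ℕ) : Equiv.Perm (Fin n) :=
  Function.Involutive.toPerm (fun j => ⟨gval n j.1, gval_lt j.2⟩)
    (fun j => by ext; exact gval_gval j.2)
lemma tau_val (n : ℕ) (j : Fin n) : (tau n j : ℕ) = gval n j.1 := rfl
def pe {n : ℕ} (p : Fin (n / 2)) (b : Bool) : Fin n :=
  ⟨2 * p.1 + (bif b then 1 else 0), by have := p.2; cases b <;> simp <;> omega⟩
lemma pe_val {n : ℕ} (p : Fin (n / 2)) (b : Bool) :
    (pe p b : ℕ) = 2 * p.1 + (bif b then 1 else 0) := rfl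
lemma tau_pe {n : ℕ} (p : Fin (n / 2)) (b : Bool) : tau n (pe p b) = pe p (!b) := by
  have := p.2
  ext
  rw [tau_val, pe_val, pe_val]
  unfold gval
  cases b <;> simp only [Bool.cond_true, Bool.cond_false, Bool.not_true, Bool.not_false] <;> split_ifs <;> omega
lemma pe_inj {n : ℕ} {p q : Fin (n / 2)} {b c : Bool} (h : pe p b = pe q c) :
    p = q ∧ b = c := by
  have h' := congrArg Fin.val h
  rw [pe_val, pe_val] at h'
  cases b <;> cases c <;> simp only [Bool.cond_true, Bool.cond_false] at h' <;>
    first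
      | exact ⟨Fin.ext (by omega), rfl⟩
      | exact absurd h' (by omega)

/-- the sets produced from a pair-set `A` by choosing one bit per pair -/
noncomputable def Phi (A : Finset (Fin (n / 2))) : Finset (Finset (Fin n)) :=
  A.powerset.image fun B => A.image fun p => pe p (decide (p ∈ B))

lemma Phi_injOn (A : Finset (Fin (n / 2))) :
    Set.InjOn (fun B => A.image fun p => pe p (decide (p ∈ B))) (A.powerset : Set (Finset (Fin (n / 2)))) := by
  intro B₁ h₁ B₂ h₂ h
  have hB₁ := Finset.mem_powerset.1 h₁
  have hB₂ := Finset.mem_powerset.1 h₂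
  dsimp only at h
  ext x
  by_cases hx : x ∈ A
  · have : pe x (decide (x ∈ B₁)) ∈ A.image fun p => pe p (decide (p ∈ B₂)) := by
      rw [← h]; exact Finset.mem_image_of_mem _ hx
    obtain ⟨q, hq, hqe⟩ := Finset.mem_image.1 this
    obtain ⟨hpq, hbc⟩ := pe_inj hqe
    subst hpq
    constructor
    · intro hx1; simpa [hx1] using hbc.symm
    · intro hx2; by_contra hx1; simp [hx1, hx2] at hbc
  · constructor
    · intro hx1; exact absurd (hB₁ hx1) hx
    · intro hx2; exact absurd (hB₂ hx2) hx

lemma Phi_card {A : Finset (Fin (n / 2))} {i : ℕ} (hA : A.card = i) : (Phi A).card = 2 ^ i := by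
  rw [Phi, Finset.card_image_of_injOn (Phi_injOn A), Finset.card_powerset, hA]

lemma Phi_subset {A : Finset (Fin (n / 2))} {i : ℕ} (hA : A.card = i) :
    Phi A ⊆ (Finset.univ.powersetCard i).filter
      fun t : Finset (Fin n) => Disjoint (t.image ⇑(tau n)) t := by
  intro t ht
  obtain ⟨B, hB, rfl⟩ := Finset.mem_image.1 ht
  have hinj : Set.InjOn (fun p => pe p (decide (p ∈ B))) A := by
    intro p hp q hq h
    exact (pe_inj h).1
  rw [Finset.mem_filter, Finset.mem_powersetCard]
  refine ⟨⟨Finset.subset_univ _, by rw [Finset.card_image_of_injOn hinj, hA]⟩, ?_⟩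
  rw [Finset.disjoint_left]
  rintro x hx hx'
  obtain ⟨y, hy, rfl⟩ := Finset.mem_image.1 hx
  obtain ⟨p, hp, rfl⟩ := Finset.mem_image.1 hy
  rw [tau_pe] at hx'
  obtain ⟨q, hq, hqe⟩ := Finset.mem_image.1 hx'
  obtain ⟨rfl, hbc⟩ := (pe_inj hqe.symm).imp Eq.symm Eq.symm
  simp at hbc

lemma Phi_disj {A A' : Finset (Fin (n / 2))} (hne : A ≠ A') : Disjoint (Phi A) (Phi A') := by
  rw [Finset.disjoint_left]
  rintro t ht ht'
  apply hne
  obtain ⟨B, hB, rfl⟩ := Finset.mem_image.1 ht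
  obtain ⟨B', hB', heq⟩ := Finset.mem_image.1 ht'
  have hrec : ∀ (C : Finset (Fin (n / 2))) (D : Finset (Fin (n / 2))),
      (C.image fun p => pe p (decide (p ∈ D))).image (fun x : Fin n => x.1 / 2)
        = C.image Fin.val := by
    intro C D
    rw [Finset.image_image]
    apply Finset.image_congr
    intro p hp
    simp [pe_val]
    cases (decide (p ∈ D)) <;> simp <;> omega
  have h2 : A.image Fin.val = A'.image Fin.val := by
    rw [← hrec A B, ← hrec A' B', heq]
  exact Finset.image_injective Fin.val_injective h2

lemma T_lower (n i : ℕ) :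
    2 ^ i * (n / 2).choose i ≤ ((Finset.univ.powersetCard i).filter
      fun t : Finset (Fin n) => Disjoint (t.image ⇑(tau n)) t).card := by
  classical
  have hsub : (Finset.univ.powersetCard i : Finset (Finset (Fin (n / 2)))).biUnion Phi ⊆
      (Finset.univ.powersetCard i).filter
        fun t : Finset (Fin n) => Disjoint (t.image ⇑(tau n)) t := by
    intro t ht
    obtain ⟨A, hA, htA⟩ := Finset.mem_biUnion.1 ht
    exact Phi_subset (Finset.mem_powersetCard.1 hA).2 htA
  calc 2 ^ i * (n / 2).choose i
      = ∑ A ∈ (Finset.univ.powersetCard i : Finset (Finset (Fin (n / 2)))), (Phi A).card := by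
        rw [Finset.sum_congr rfl fun A hA => Phi_card (Finset.mem_powersetCard.1 hA).2,
          Finset.sum_const, Finset.card_powersetCard, Finset.card_univ, Fintype.card_fin,
          smul_eq_mul, mul_comm]
    _ = ((Finset.univ.powersetCard i : Finset (Finset (Fin (n / 2)))).biUnion Phi).card := by
        rw [Finset.card_biUnion]
        intro A hA A' hA' hne
        exact Phi_disj hne
    _ ≤ _ := Finset.card_le_card hsub


lemma subtypeCongr_apply' {α : Type*} {p q : α → Prop} [DecidablePred p] [DecidablePred q]
    (e : { x // p x } ≃ { x // q x }) (f : { x // ¬p x } ≃ { x // ¬q x }) (x : α) :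
    Equiv.subtypeCongr e f x = if h : p x then (e ⟨x, h⟩ : α) else (f ⟨x, h⟩ : α) := by
  unfold Equiv.subtypeCongr
  by_cases h : p x <;> simp [h]

lemma fiber_card {n i : ℕ} (s t : Finset (Fin n)) (hs : s.card = i) (ht : t.card = i) :
    (Finset.univ.filter fun σ : Equiv.Perm (Fin n) => t.image ⇑σ = s).card
      = i.factorial * (n - i).factorial := by
  classical
  rw [← Fintype.card_subtype]
  have hmem : ∀ (σ : Equiv.Perm (Fin n)), t.image ⇑σ = s → ∀ a, a ∈ t ↔ σ a ∈ s := by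
    intro σ h a
    constructor
    · intro ha; rw [← h]; exact Finset.mem_image_of_mem _ ha
    · intro ha
      rw [← h] at ha
      obtain ⟨b, hb, hba⟩ := Finset.mem_image.1 ha
      rwa [← σ.injective hba]
  have E : { σ : Equiv.Perm (Fin n) // t.image ⇑σ = s } ≃
      (({ x // x ∈ t } ≃ { x // x ∈ s }) × ({ x // ¬x ∈ t } ≃ { x // ¬x ∈ s })) :=
    { toFun := fun σ =>
        (Equiv.subtypeEquiv σ.1 (hmem σ.1 σ.2),
         Equiv.subtypeEquiv σ.1 (fun a => not_iff_not.2 (hmem σ.1 σ.2 a)))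
      invFun := fun ef =>
        ⟨Equiv.subtypeCongr ef.1 ef.2, by
          apply Finset.eq_of_subset_of_card_le
          · intro x hx
            obtain ⟨a, ha, hax⟩ := Finset.mem_image.1 hx
            rw [subtypeCongr_apply', dif_pos ha] at hax
            rw [← hax]
            exact (ef.1 ⟨a, ha⟩).2
          · rw [Finset.card_image_of_injective _ (Equiv.injective _), hs, ht]⟩
      left_inv := fun σ => Subtype.ext (Equiv.ext fun x => by
        rw [subtypeCongr_apply']
        split_ifs <;> rfl)
      right_inv := fun ef => by
        refine Prod.ext (Equiv.ext fun x => Subtype.ext ?_) (Equiv.ext fun x => Subtype.ext ?_) <;>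
          simp [Equiv.subtypeEquiv, subtypeCongr_apply', x.2] }
  rw [Fintype.card_congr E, Fintype.card_prod]
  have h1 : Fintype.card { x // x ∈ t } = i := by simp [ht]
  have h2 : Fintype.card { x // x ∈ s } = i := by simp [hs]
  have h3 : Fintype.card { x : Fin n // ¬x ∈ t } = n - i := by
    rw [Fintype.card_subtype_compl, h1, Fintype.card_fin]
  have h4 : Fintype.card { x : Fin n // ¬x ∈ s } = n - i := by
    rw [Fintype.card_subtype_compl, h2, Fintype.card_fin]
  rw [Fintype.card_equiv (Fintype.equivOfCardEq (h1.trans h2.symm)),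
    Fintype.card_equiv (Fintype.equivOfCardEq (h3.trans h4.symm)), h1, h3]

lemma img_inv_eq {n : ℕ} {σ : Equiv.Perm (Fin n)} {s t : Finset (Fin n)} :
    s.image ⇑σ⁻¹ = t ↔ t.image ⇑σ = s := by
  constructor
  · rintro rfl; rw [Finset.image_image]; ext x; simp
  · rintro rfl; rw [Finset.image_image]; ext x; simp

lemma count_inverting {n i : ℕ} (s : Finset (Fin n)) (hsi : s.card = i) :
    2 ^ i * (n / 2).choose i * (i.factorial * (n - i).factorial) ≤
      (Finset.univ.filter fun σ : Equiv.Perm (Fin n) =>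
        Disjoint (s.image ⇑(σ * tau n * σ⁻¹)) s).card := by
  classical
  have hpred : ∀ σ : Equiv.Perm (Fin n),
      (Disjoint (s.image ⇑(σ * tau n * σ⁻¹)) s ↔
        Disjoint ((s.image ⇑σ⁻¹).image ⇑(tau n)) (s.image ⇑σ⁻¹)) := by
    intro σ
    have h1 : s.image ⇑(σ * tau n * σ⁻¹) = ((s.image ⇑σ⁻¹).image ⇑(tau n)).image ⇑σ := by
      rw [Finset.image_image, Finset.image_image]
      rfl
    have h2 : s = (s.image ⇑σ⁻¹).image ⇑σ := by
      rw [Finset.image_image]; ext x; simp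
    rw [h1]
    nth_rewrite 2 [h2]
    exact Finset.disjoint_image σ.injective
  rw [Finset.filter_congr fun σ _ => hpred σ]
  set T := (Finset.univ.powersetCard i).filter
      (fun t : Finset (Fin n) => Disjoint (t.image ⇑(tau n)) t) with hT
  have himg : ∀ σ : Equiv.Perm (Fin n), (s.image ⇑σ⁻¹).card = i := fun σ => by
    rw [Finset.card_image_of_injective _ (Equiv.injective _), hsi]
  rw [Finset.card_eq_sum_card_fiberwise
    (f := fun σ : Equiv.Perm (Fin n) => s.image ⇑σ⁻¹) (t := T)
    (fun σ hσ => by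
      rw [hT, Finset.mem_coe, Finset.mem_filter, Finset.mem_powersetCard]
      exact ⟨⟨Finset.subset_univ _, himg σ⟩, (Finset.mem_filter.1 (Finset.mem_coe.1 hσ)).2⟩)]
  have hterm : ∀ t ∈ T,
      ((Finset.univ.filter fun σ : Equiv.Perm (Fin n) =>
          Disjoint ((s.image ⇑σ⁻¹).image ⇑(tau n)) (s.image ⇑σ⁻¹)).filter
        (fun σ : Equiv.Perm (Fin n) => s.image ⇑σ⁻¹ = t)).card = i.factorial * (n - i).factorial := by
    intro t ht
    rw [Finset.mem_filter, Finset.mem_powersetCard] at ht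
    have heq : ((Finset.univ.filter fun σ : Equiv.Perm (Fin n) =>
          Disjoint ((s.image ⇑σ⁻¹).image ⇑(tau n)) (s.image ⇑σ⁻¹)).filter
        (fun σ : Equiv.Perm (Fin n) => s.image ⇑σ⁻¹ = t)) =
        Finset.univ.filter fun σ : Equiv.Perm (Fin n) => t.image ⇑σ = s := by
      ext σ
      simp only [Finset.mem_filter, Finset.mem_univ, true_and]
      constructor
      · rintro ⟨_, h⟩; exact img_inv_eq.1 h
      · intro h
        have h' := img_inv_eq.2 h
        exact ⟨h' ▸ ht.2, h'⟩
    rw [heq, fiber_card s t hsi ht.1.2]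
  rw [Finset.sum_congr rfl hterm, Finset.sum_const, smul_eq_mul]
  exact Nat.mul_le_mul_right _ (T_lower n i)

/-- If a collection `S` of subsets of an `n`-set contains `mᵢ` sets of cardinality `i`
for `i = 1,…,⌊n/2⌋`, then some permutation inverts at least
`(⌊n/2⌋!/n!) · Σᵢ (2^i (n−i)!/⌊n/2−i⌋!) mᵢ` of the sets. -/
theorem stmt8 (n : ℕ) (S : Finset (Finset (Fin n))) (m : ℕ → ℕ)
    (hm : ∀ i ∈ Finset.Icc 1 (n / 2), (S.filter fun s => s.card = i).card = m i) :
    ∃ π : Equiv.Perm (Fin n),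
      (Nat.factorial (n / 2) : ℝ) / Nat.factorial n *
          ∑ i ∈ Finset.Icc 1 (n / 2),
            (2 : ℝ) ^ i * Nat.factorial (n - i) / Nat.factorial (n / 2 - i) * m i ≤
        ((S.filter fun s => Disjoint (s.image π) s).card : ℝ) := by
  classical
  set w : ℕ → ℕ := fun i => 2 ^ i * (n / 2).choose i * (i.factorial * (n - i).factorial)
    with hw
  set N : Finset (Fin n) → ℕ := fun s =>
    (Finset.univ.filter fun σ : Equiv.Perm (Fin n) =>
      Disjoint (s.image ⇑(σ * tau n * σ⁻¹)) s).card with hN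
  set F : Equiv.Perm (Fin n) → ℕ := fun σ =>
    (S.filter fun s => Disjoint (s.image ⇑(σ * tau n * σ⁻¹)) s).card with hF
  set W : ℕ := ∑ i ∈ Finset.Icc 1 (n / 2), m i * w i with hW
  have hsum : W ≤ ∑ σ : Equiv.Perm (Fin n), F σ := by
    have hswap : ∑ σ : Equiv.Perm (Fin n), F σ = ∑ s ∈ S, N s := by
      simp only [hF, hN, Finset.card_filter]
      rw [Finset.sum_comm]
    rw [hswap]
    set B := (Finset.Icc 1 (n / 2)).biUnion (fun i => S.filter fun s => s.card = i) with hB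
    have hBsub : B ⊆ S := Finset.biUnion_subset.2 fun i _ => Finset.filter_subset _ _
    have hdisj : ∀ i ∈ Finset.Icc 1 (n / 2), ∀ j ∈ Finset.Icc 1 (n / 2), i ≠ j →
        Disjoint (S.filter fun s => s.card = i) (S.filter fun s => s.card = j) := by
      intro i _ j _ hij
      rw [Finset.disjoint_left]
      rintro s hs hs'
      rw [Finset.mem_filter] at hs hs'
      exact hij (hs.2 ▸ hs'.2 ▸ rfl)
    calc W = ∑ i ∈ Finset.Icc 1 (n / 2), ∑ _s ∈ S.filter (fun s => s.card = i), w i := by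
            rw [hW]
            refine Finset.sum_congr rfl fun i hi => ?_
            rw [Finset.sum_const, hm i hi, smul_eq_mul]
      _ ≤ ∑ i ∈ Finset.Icc 1 (n / 2), ∑ s ∈ S.filter (fun s => s.card = i), N s := by
            refine Finset.sum_le_sum fun i hi => Finset.sum_le_sum fun s hs => ?_
            exact count_inverting s (Finset.mem_filter.1 hs).2
      _ = ∑ s ∈ B, N s := (Finset.sum_biUnion hdisj).symm
      _ ≤ ∑ s ∈ S, N s := Finset.sum_le_sum_of_subset hBsub
  have hex : ∃ σ : Equiv.Perm (Fin n), (W : ℝ) / (Nat.factorial n) ≤ F σ := by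
    have hne : (Finset.univ : Finset (Equiv.Perm (Fin n))).Nonempty := Finset.univ_nonempty
    have hfac : ((Nat.factorial n : ℕ) : ℝ) ≠ 0 := Nat.cast_ne_zero.2 (Nat.factorial_ne_zero _)
    have hle : ∑ _σ : Equiv.Perm (Fin n), ((W : ℝ) / Nat.factorial n)
        ≤ ∑ σ : Equiv.Perm (Fin n), (F σ : ℝ) := by
      rw [Finset.sum_const, Finset.card_univ, Fintype.card_perm, Fintype.card_fin,
        nsmul_eq_mul, mul_comm, div_mul_cancel₀ _ hfac]
      exact_mod_cast hsum
    obtain ⟨σ, _, hσ⟩ := Finset.exists_le_of_sum_le hne hle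
    exact ⟨σ, hσ⟩
  obtain ⟨σ, hσ⟩ := hex
  refine ⟨σ * tau n * σ⁻¹, le_trans (le_of_eq ?_) hσ⟩
  have harith : ∀ i ∈ Finset.Icc 1 (n / 2),
      (Nat.factorial (n / 2) : ℝ) *
        ((2 : ℝ) ^ i * Nat.factorial (n - i) / Nat.factorial (n / 2 - i) * m i)
      = ((m i * w i : ℕ) : ℝ) := by
    intro i hi
    obtain ⟨_, hi2⟩ := Finset.mem_Icc.1 hi
    have hkey : Nat.factorial (n / 2) = (n / 2).choose i * i.factorial * (n / 2 - i).factorial :=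
      (Nat.choose_mul_factorial_mul_factorial hi2).symm
    have hne : ((Nat.factorial (n / 2 - i) : ℕ) : ℝ) ≠ 0 :=
      Nat.cast_ne_zero.2 (Nat.factorial_ne_zero _)
    rw [hw]
    push_cast [hkey]
    field_simp
  rw [div_mul_eq_mul_div, Finset.mul_sum, Finset.sum_congr rfl harith, hW]
  push_cast
  rfl


end
end

section
/- Let n be even, k < n/2, K = {1, ..., n/2 − k}, and let R_1, ..., R_m be k-subsets of {1,...,n} \ K such that |R_i ∩ R_j| < k/3 for all i ≠ j. Set S_i = K ∪ R_i. Then no three of the sets S_i can be simultaneously inverted by a single permutation of {1,...,n}. -/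
/-- Let `n` be even, `k < n/2`, let `K` be the set of the first `n/2 − k` elements of
an `n`-set, and let `R₁,…,Rₘ` be `k`-subsets of the complement of `K` with pairwise
intersections of size `< k/3`. Then no three of the sets `Sᵢ = K ∪ Rᵢ` can be
simultaneously inverted by a single permutation. -/
theorem stmt11 (n k m : ℕ) (hn : Even n) (hk : k < n / 2)
    (R : Fin m → Finset (Fin n))
    (hRcard : ∀ i, (R i).card = k)
    (hRK : ∀ i, ∀ x ∈ R i, ¬ ((x : ℕ) < n / 2 - k))
    (hint : ∀ i j, i ≠ j → 3 * ((R i) ∩ (R j)).card < k)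
    (S : Fin m → Finset (Fin n))
    (hS : ∀ i, S i = (Finset.univ.filter fun x : Fin n => (x : ℕ) < n / 2 - k) ∪ R i)
    (a b c : Fin m) (hab : a ≠ b) (hac : a ≠ c) (hbc : b ≠ c) :
    ¬ ∃ π : Equiv.Perm (Fin n),
        Disjoint ((S a).image π) (S a) ∧ Disjoint ((S b).image π) (S b) ∧
          Disjoint ((S c).image π) (S c) := by
  rintro ⟨π, ha, hb, hc⟩
  set K : Finset (Fin n) := Finset.univ.filter fun x : Fin n => (x : ℕ) < n / 2 - k with hK
  have hle : n / 2 - k ≤ n := le_trans (Nat.sub_le _ _) (Nat.div_le_self n 2)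
  -- cardinality of K
  have hKcard : K.card = n / 2 - k := by
    have : K = Finset.map ⟨Fin.castLE hle, Fin.castLE_injective hle⟩ Finset.univ := by
      ext x
      simp only [hK, Finset.mem_filter, Finset.mem_univ, true_and, Finset.mem_map,
        Function.Embedding.coeFn_mk]
      constructor
      · intro hx; exact ⟨⟨(x : ℕ), hx⟩, by ext; simp⟩
      · rintro ⟨y, rfl⟩; simp
    rw [this, Finset.card_map, Finset.card_univ, Fintype.card_fin]
  -- K is disjoint from each R i
  have hdisj : ∀ i, Disjoint K (R i) := by
    intro i
    rw [Finset.disjoint_left]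
    intro x hx hx'
    exact hRK i x hx' (by simpa [hK] using hx)
  -- lower bound on the card of the union of the R's
  have hRU : 2 * k < (R a ∪ R b ∪ R c).card := by
    have h1 := Finset.card_union_add_card_inter (R a) (R b)
    have h2 := Finset.card_union_add_card_inter (R a ∪ R b) (R c)
    have h3 : ((R a ∪ R b) ∩ R c).card ≤ (R a ∩ R c).card + (R b ∩ R c).card := by
      rw [Finset.union_inter_distrib_right]
      exact Finset.card_union_le _ _
    have hab' := hint a b hab
    have hac' := hint a c hac
    have hbc' := hint b c hbc
    have := hRcard a; have := hRcard b; have := hRcard c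
    omega
  -- union of the S's
  have hSU : (S a ∪ S b ∪ S c) = K ∪ (R a ∪ R b ∪ R c) := by
    rw [hS a, hS b, hS c]
    ext x; simp [hK]; tauto
  have hSUcard : (S a ∪ S b ∪ S c).card = K.card + (R a ∪ R b ∪ R c).card := by
    rw [hSU]
    refine Finset.card_union_of_disjoint ?_
    rw [Finset.disjoint_union_right, Finset.disjoint_union_right]
    exact ⟨⟨hdisj a, hdisj b⟩, hdisj c⟩
  -- π maps K into the complement of the union
  have hsub : K.image π ⊆ (S a ∪ S b ∪ S c)ᶜ := by
    intro y hy
    obtain ⟨x, hx, rfl⟩ := Finset.mem_image.mp hy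
    have hmem : ∀ i, x ∈ S i := fun i => by
      rw [hS i]; exact Finset.mem_union_left _ (by simpa [hK] using hx)
    rw [Finset.mem_compl]
    simp only [Finset.mem_union, not_or]
    refine ⟨⟨?_, ?_⟩, ?_⟩
    · exact Finset.disjoint_left.mp ha (Finset.mem_image_of_mem π (hmem a))
    · exact Finset.disjoint_left.mp hb (Finset.mem_image_of_mem π (hmem b))
    · exact Finset.disjoint_left.mp hc (Finset.mem_image_of_mem π (hmem c))
  have hcard : K.card ≤ n - (S a ∪ S b ∪ S c).card := by
    calc K.card = (K.image π).card :=
          (Finset.card_image_of_injective _ π.injective).symm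
      _ ≤ ((S a ∪ S b ∪ S c)ᶜ).card := Finset.card_le_card hsub
      _ = n - (S a ∪ S b ∪ S c).card := by
          rw [Finset.card_compl, Fintype.card_fin]
  have hUn : (S a ∪ S b ∪ S c).card ≤ n := by
    simpa using Finset.card_le_univ (S a ∪ S b ∪ S c)
  have hn2 : n % 2 = 0 := Nat.even_iff.mp hn
  omega
end

section
/- Let X_1, ..., X_m be subsets of an n-element set, each of size cn, such that |X_i ∩ X_j| < αcn for all i ≠ j, where 0 < α < c ≤ 1. Then m ≤ (1−α)/(c−α). -/
/-- If `X₁,…,Xₘ` are `cn`-subsets of an `n`-set with pairwise intersections of size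
`< αcn`, where `0 < α < c ≤ 1`, then `m ≤ (1−α)/(c−α)`. -/
theorem stmt13 (n m : ℕ) (hn : 0 < n) (c α : ℝ) (hα : 0 < α) (hαc : α < c) (hc : c ≤ 1)
    (X : Fin m → Finset (Fin n))
    (hcard : ∀ i, ((X i).card : ℝ) = c * n)
    (hint : ∀ i j : Fin m, i ≠ j → (((X i) ∩ (X j)).card : ℝ) < α * c * n) :
    (m : ℝ) ≤ (1 - α) / (c - α) := by
  have hcα : (0:ℝ) < c - α := by linarith
  have hα1 : α < 1 := lt_of_lt_of_le hαc hc
  rcases Nat.eq_zero_or_pos m with hm | hm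
  · subst hm
    simp only [Nat.cast_zero]
    apply div_nonneg <;> linarith
  rw [le_div_iff₀ hcα]
  -- indicator function
  set f : Fin n → ℝ := fun x => ∑ i : Fin m, if x ∈ X i then (1:ℝ) else 0 with hf
  have h1 : ∑ x : Fin n, f x = m * (c * n) := by
    rw [Finset.sum_comm]
    have : ∀ i : Fin m, ∑ x : Fin n, (if x ∈ X i then (1:ℝ) else 0) = c * n := by
      intro i
      rw [Finset.sum_ite_mem, Finset.univ_inter, ← hcard i]
      simp
    simp [this]
  have h2 : ∑ x : Fin n, (f x)^2 = ∑ i : Fin m, ∑ j : Fin m, (((X i) ∩ (X j)).card : ℝ) := by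
    have key : ∀ x : Fin n, (f x)^2 = ∑ i : Fin m, ∑ j : Fin m,
        (if x ∈ X i ∩ X j then (1:ℝ) else 0) := by
      intro x
      rw [sq, hf, Finset.sum_mul_sum]
      simp only [Finset.mem_inter]
      congr 1; ext i; congr 1; ext j
      by_cases h1 : x ∈ X i <;> by_cases h2 : x ∈ X j <;> simp [h1, h2]
    simp only [key]
    rw [Finset.sum_comm]
    congr 1; ext i
    rw [Finset.sum_comm]
    congr 1; ext j
    rw [Finset.sum_ite_mem, Finset.univ_inter]
    simp
  have h3 : ∑ i : Fin m, ∑ j : Fin m, (((X i) ∩ (X j)).card : ℝ)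
      ≤ m * (c * n) + m * (m - 1) * (α * c * n) := by
    have hb : ∀ i : Fin m, ∑ j : Fin m, (((X i) ∩ (X j)).card : ℝ)
        ≤ c * n + (m - 1) * (α * c * n) := by
      intro i
      rw [← Finset.add_sum_erase _ _ (Finset.mem_univ i)]
      have hd : (((X i) ∩ (X i)).card : ℝ) = c * n := by
        rw [Finset.inter_self]; exact hcard i
      rw [hd]
      gcongr
      calc ∑ j ∈ Finset.univ.erase i, (((X i) ∩ (X j)).card : ℝ)
          ≤ ∑ j ∈ Finset.univ.erase i, (α * c * n) := by
            apply Finset.sum_le_sum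
            intro j hj
            exact le_of_lt (hint i j (Ne.symm (Finset.ne_of_mem_erase hj)))
        _ = (m - 1) * (α * c * n) := by
            rw [Finset.sum_const, Finset.card_erase_of_mem (Finset.mem_univ i),
              Finset.card_univ, Fintype.card_fin, nsmul_eq_mul]
            congr 1
            rw [Nat.cast_sub hm, Nat.cast_one]
    calc ∑ i : Fin m, ∑ j : Fin m, (((X i) ∩ (X j)).card : ℝ)
        ≤ ∑ _i : Fin m, (c * n + (m - 1) * (α * c * n)) := Finset.sum_le_sum fun i _ => hb i
      _ = m * (c * n) + m * (m - 1) * (α * c * n) := by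
          rw [Finset.sum_const, Finset.card_univ, Fintype.card_fin, nsmul_eq_mul]; ring
  have hcs : (∑ x : Fin n, f x)^2 ≤ (n : ℝ) * ∑ x : Fin n, (f x)^2 := by
    have := sq_sum_le_card_mul_sum_sq (s := (Finset.univ : Finset (Fin n))) (f := f)
    simpa using this
  rw [h1, h2] at hcs
  have hmain : (m * (c * n))^2 ≤ (n:ℝ) * (m * (c * n) + m * (m - 1) * (α * c * n)) := by
    calc (m * (c * n))^2 ≤ (n:ℝ) * ∑ i : Fin m, ∑ j : Fin m, (((X i) ∩ (X j)).card : ℝ) := hcs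
      _ ≤ _ := by
        apply mul_le_mul_of_nonneg_left h3 (by positivity)
  have hn' : (0:ℝ) < n := by exact_mod_cast hn
  have hm' : (1:ℝ) ≤ m := by exact_mod_cast hm
  have hc0 : (0:ℝ) < c := lt_trans hα hαc
  -- from hmain: m² c² n² ≤ m c n² + m(m-1) α c n²; divide by c n² m
  have k1 : (m:ℝ)^2 * c ≤ m + m*(m-1)*α := by
    nlinarith [hmain, mul_pos hc0 (mul_pos hn' hn'), mul_pos hn' hn']
  have k2 : (m:ℝ)*c ≤ 1 + ((m:ℝ)-1)*α := by
    nlinarith [k1, hm']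
  nlinarith [k2]
end

section
/- For any finite sets X_1, ..., X_m, the inequality (Σ_{i=1}^m |X_i|)² ≤ |⋃_{i=1}^m X_i| · Σ_{i=1}^m Σ_{j=1}^m |X_i ∩ X_j| holds. -/
/-- Chung–Erdős inequality: `(Σᵢ |Xᵢ|)² ≤ |⋃ᵢ Xᵢ| · Σᵢ Σⱼ |Xᵢ ∩ Xⱼ|`. -/
theorem stmt14 {α : Type*} [DecidableEq α] (m : ℕ) (X : Fin m → Finset α) :
    (∑ i, (X i).card) ^ 2 ≤
      (Finset.univ.biUnion X).card * ∑ i, ∑ j, ((X i) ∩ (X j)).card := by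
  classical
  set U := Finset.univ.biUnion X with hU
  set f : α → ℕ := fun x => ∑ i, if x ∈ X i then 1 else 0 with hf
  have hsub : ∀ i, X i ⊆ U := fun i => Finset.subset_biUnion_of_mem X (Finset.mem_univ i)
  have hcard : ∀ s : Finset α, s ⊆ U → s.card = ∑ x ∈ U, if x ∈ s then 1 else 0 := by
    intro s hs
    rw [← Finset.sum_filter, Finset.sum_const, smul_eq_mul, mul_one]
    congr 1
    ext x
    simp only [Finset.mem_filter]
    exact ⟨fun h => ⟨hs h, h⟩, fun h => h.2⟩
  have h1 : ∑ i, (X i).card = ∑ x ∈ U, f x := by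
    simp only [hf]
    rw [Finset.sum_comm]
    exact Finset.sum_congr rfl fun i _ => hcard (X i) (hsub i)
  have h2 : ∑ i, ∑ j, ((X i) ∩ (X j)).card = ∑ x ∈ U, f x ^ 2 := by
    have key : ∀ i j : Fin m, ((X i) ∩ (X j)).card
        = ∑ x ∈ U, (if x ∈ X i then 1 else 0) * (if x ∈ X j then 1 else 0) := by
      intro i j
      rw [hcard (X i ∩ X j) ((Finset.inter_subset_left).trans (hsub i))]
      refine Finset.sum_congr rfl fun x _ => ?_
      by_cases hxi : x ∈ X i <;> by_cases hxj : x ∈ X j <;> simp [hxi, hxj]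
    simp only [key]
    symm
    simp only [sq, hf, Finset.sum_mul_sum]
    rw [Finset.sum_comm]
    exact Finset.sum_congr rfl fun i _ => Finset.sum_comm
  rw [h1, h2]
  exact sq_sum_le_card_mul_sum_sq
end

section
/- Let P(n, c, α) denote the maximum number of cn-subsets of an n-set such that any two intersect in fewer than αcn elements. For 1 ≥ e ≥ c and αc ≥ d ≥ 0 (with all of cn, dn, en integers), C((e−d)n, (e−c)n) · P(n, c, α) ≤ C(n, cn) · P((e−d)n, (c−d)/(e−d), (αc−d)/(c−d)). -/
/-- `F` is a packing: a family of `cn`-subsets of an `n`-set, any two distinct members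
of which intersect in fewer than `αcn` elements. -/
def IsPacking (n : ℕ) (c α : ℝ) (F : Finset (Finset (Fin n))) : Prop :=
  (∀ X ∈ F, ((X.card : ℝ)) = c * n) ∧
    ∀ X ∈ F, ∀ Y ∈ F, X ≠ Y → (((X ∩ Y).card : ℝ)) < α * (c * n)

/-- `P n c α` is the maximum number of blocks in a packing `Π(n,c,α)`. -/
noncomputable def maxPacking (n : ℕ) (c α : ℝ) : ℕ :=
  sSup {m : ℕ | ∃ F : Finset (Finset (Fin n)), IsPacking n c α F ∧ F.card = m}

lemma packing_bdd (n : ℕ) (c α : ℝ) :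
    BddAbove {m : ℕ | ∃ F : Finset (Finset (Fin n)), IsPacking n c α F ∧ F.card = m} := by
  refine ⟨Fintype.card (Finset (Fin n)), ?_⟩
  rintro m ⟨F, -, rfl⟩
  exact Finset.card_le_univ F

lemma card_le_maxPacking {n : ℕ} {c α : ℝ} {F : Finset (Finset (Fin n))}
    (h : IsPacking n c α F) : F.card ≤ maxPacking n c α :=
  le_csSup (packing_bdd n c α) ⟨F, h, rfl⟩

lemma exists_maxPacking (n : ℕ) (c α : ℝ) :
    ∃ F : Finset (Finset (Fin n)), IsPacking n c α F ∧ F.card = maxPacking n c α := by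
  have h0 : (0 : ℕ) ∈ {m : ℕ | ∃ F : Finset (Finset (Fin n)), IsPacking n c α F ∧ F.card = m} :=
    ⟨∅, by simp [IsPacking], by simp⟩
  exact Nat.sSup_mem ⟨0, h0⟩ (packing_bdd n c α)

lemma chooseId (n cn dn en : ℕ) (h1 : dn ≤ cn) (h2 : cn ≤ en) (h3 : en ≤ n) :
    n.choose en * en.choose dn * (en - dn).choose (cn - dn) =
      n.choose cn * cn.choose dn * (n - cn).choose (en - cn) := by
  rw [Nat.choose_mul (h1.trans h2), Nat.choose_mul h1, mul_assoc, mul_assoc,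
    Nat.choose_mul (Nat.sub_le_sub_right h2 dn)]
  have e1 : n - dn - (cn - dn) = n - cn := by omega
  have e2 : en - dn - (cn - dn) = en - cn := by omega
  rw [e1, e2]

lemma filter_card_le {n : ℕ} (c' α' : ℝ) (F : Finset (Finset (Fin n)))
    (m dn : ℕ) (U V : Finset (Fin n)) (hUV : U ⊆ V) (hUcard : U.card = dn)
    (hVU : (V \ U).card = m)
    (hcard' : ∀ X ∈ F, U ⊆ X → X ⊆ V → ((X.card - dn : ℕ) : ℝ) = c' * m)
    (hdeg : ∀ X ∈ F, ∀ Y ∈ F, X ≠ Y → U ⊆ X → U ⊆ Y → X ⊆ V → Y ⊆ V →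
      (((X ∩ Y).card - dn : ℕ) : ℝ) < α' * (c' * m)) :
    (F.filter (fun X => U ⊆ X ∧ X ⊆ V)).card ≤ maxPacking m c' α' := by
  classical
  set G := F.filter (fun X => U ⊆ X ∧ X ⊆ V) with hG
  set σ : {x // x ∈ V \ U} ≃ Fin m := Finset.equivFinOfCardEq hVU with hσ
  set τ : Fin m → Fin n := fun i => (σ.symm i : Fin n) with hτdef
  have hτ : Function.Injective τ := fun a b hab => σ.symm.injective (Subtype.ext hab)
  set φ : Finset (Fin n) → Finset (Fin m) :=
    fun X => Finset.univ.filter (fun i => τ i ∈ X \ U) with hφ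
  have himg : ∀ X ⊆ V, (φ X).image τ = X \ U := by
    intro X hXV
    ext a
    simp only [hφ, Finset.mem_image, Finset.mem_filter, Finset.mem_univ, true_and]
    constructor
    · rintro ⟨i, hi, rfl⟩; exact hi
    · intro ha
      have haVU : a ∈ V \ U := by
        rw [Finset.mem_sdiff] at ha ⊢
        exact ⟨hXV ha.1, ha.2⟩
      refine ⟨σ ⟨a, haVU⟩, ?_, ?_⟩
      · simpa [hτdef] using ha
      · simp [hτdef]
  have hcardφ : ∀ X ⊆ V, (φ X).card = (X \ U).card := by
    intro X hXV
    rw [← himg X hXV, Finset.card_image_of_injective _ hτ]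
  have hinter : ∀ X Y : Finset (Fin n), (φ X ∩ φ Y) = φ (X ∩ Y) := by
    intro X Y
    ext i
    simp only [hφ, Finset.mem_inter, Finset.mem_filter, Finset.mem_univ, true_and,
      Finset.mem_sdiff]
    tauto
  have hsub : ∀ X ∈ G, U ⊆ X ∧ X ⊆ V := fun X hX => (Finset.mem_filter.mp hX).2
  have hinj : Set.InjOn φ G := by
    intro X hX Y hY hXY
    have hX' := hsub X hX; have hY' := hsub Y hY
    have h2 : X \ U = Y \ U := by rw [← himg X hX'.2, ← himg Y hY'.2, hXY]
    calc X = X \ U ∪ U := (Finset.sdiff_union_of_subset hX'.1).symm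
      _ = Y \ U ∪ U := by rw [h2]
      _ = Y := Finset.sdiff_union_of_subset hY'.1
  have hGcard : G.card = (G.image φ).card := (Finset.card_image_of_injOn hinj).symm
  rw [hGcard]
  apply card_le_maxPacking
  constructor
  · intro A hA
    obtain ⟨X, hXG, rfl⟩ := Finset.mem_image.mp hA
    have hX' := hsub X hXG
    have hXF := (Finset.mem_filter.mp hXG).1
    rw [hcardφ X hX'.2, Finset.card_sdiff_of_subset hX'.1, hUcard]
    exact hcard' X hXF hX'.1 hX'.2
  · intro A hA B hB hAB
    obtain ⟨X, hXG, rfl⟩ := Finset.mem_image.mp hA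
    obtain ⟨Y, hYG, rfl⟩ := Finset.mem_image.mp hB
    have hXY : X ≠ Y := fun h => hAB (by rw [h])
    have hX' := hsub X hXG; have hY' := hsub Y hYG
    have hXF := (Finset.mem_filter.mp hXG).1
    have hYF := (Finset.mem_filter.mp hYG).1
    have hXYV : X ∩ Y ⊆ V := Finset.inter_subset_left.trans hX'.2
    rw [hinter X Y, hcardφ _ hXYV, Finset.card_sdiff_of_subset (Finset.subset_inter hX'.1 hY'.1), hUcard]
    exact hdeg X hXF Y hYF hXY hX'.1 hY'.1 hX'.2 hY'.2

lemma card_supersets {n : ℕ} (X : Finset (Fin n)) (cn en : ℕ) (hX : X.card = cn)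
    (hce : cn ≤ en) :
    (((Finset.univ : Finset (Fin n)).powersetCard en).filter (fun V => X ⊆ V)).card
      = (n - cn).choose (en - cn) := by
  classical
  have hcc : (Finset.powersetCard (en - cn) Xᶜ).card = (n - cn).choose (en - cn) := by
    rw [Finset.card_powersetCard, Finset.card_compl, Fintype.card_fin, hX]
  rw [← hcc]
  apply Finset.card_bij' (fun V _ => V \ X) (fun W _ => W ∪ X)
  · intro V hV
    rw [Finset.mem_filter, Finset.mem_powersetCard] at hV
    rw [Finset.mem_powersetCard]
    constructor
    · intro a ha
      rw [Finset.mem_sdiff] at ha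
      rw [Finset.mem_compl]
      exact ha.2
    · rw [Finset.card_sdiff_of_subset hV.2, hV.1.2, hX]
  · intro W hW
    rw [Finset.mem_powersetCard] at hW
    have hdisj : ∀ a ∈ W, a ∉ X := fun a ha => Finset.mem_compl.mp (hW.1 ha)
    rw [Finset.mem_filter, Finset.mem_powersetCard]
    refine ⟨⟨Finset.subset_univ _, ?_⟩, Finset.subset_union_right⟩
    rw [Finset.card_union_of_disjoint (Finset.disjoint_left.mpr hdisj), hW.2, hX]
    omega
  · intro V hV
    rw [Finset.mem_filter] at hV
    exact Finset.sdiff_union_of_subset hV.2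
  · intro W hW
    rw [Finset.mem_powersetCard] at hW
    have hdisj : ∀ a ∈ W, a ∉ X := fun a ha => Finset.mem_compl.mp (hW.1 ha)
    ext a
    simp only [Finset.mem_sdiff, Finset.mem_union]
    constructor
    · rintro ⟨h1 | h1, h2⟩
      · exact h1
      · exact absurd h1 h2
    · intro ha
      exact ⟨Or.inl ha, hdisj a ha⟩

lemma double_count {n : ℕ} (F : Finset (Finset (Fin n))) (cn dn en : ℕ)
    (hcard : ∀ X ∈ F, X.card = cn) (h1 : dn ≤ cn) (h2 : cn ≤ en) :
    ∑ V ∈ (Finset.univ : Finset (Fin n)).powersetCard en, ∑ U ∈ V.powersetCard dn,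
      (F.filter (fun X => U ⊆ X ∧ X ⊆ V)).card
    = F.card * (cn.choose dn * (n - cn).choose (en - cn)) := by
  classical
  have inner : ∀ X ∈ F, ∀ V : Finset (Fin n),
      (∑ U ∈ V.powersetCard dn, if U ⊆ X ∧ X ⊆ V then 1 else 0) =
        if X ⊆ V then cn.choose dn else 0 := by
    intro X hX V
    by_cases hXV : X ⊆ V
    · rw [if_pos hXV]
      calc ∑ U ∈ V.powersetCard dn, (if U ⊆ X ∧ X ⊆ V then 1 else 0)
          = ((V.powersetCard dn).filter (fun U => U ⊆ X ∧ X ⊆ V)).card :=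
            (Finset.card_filter _ _).symm
        _ = (X.powersetCard dn).card := by
            congr 1
            ext U
            simp only [Finset.mem_filter, Finset.mem_powersetCard]
            constructor
            · rintro ⟨⟨hUV, hUc⟩, hUX, -⟩; exact ⟨hUX, hUc⟩
            · rintro ⟨hUX, hUc⟩; exact ⟨⟨hUX.trans hXV, hUc⟩, hUX, hXV⟩
        _ = cn.choose dn := by rw [Finset.card_powersetCard, hcard X hX]
    · rw [if_neg hXV]
      apply Finset.sum_eq_zero
      intro U hU
      simp [hXV]
  calc ∑ V ∈ (Finset.univ : Finset (Fin n)).powersetCard en, ∑ U ∈ V.powersetCard dn,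
        (F.filter (fun X => U ⊆ X ∧ X ⊆ V)).card
      = ∑ V ∈ (Finset.univ : Finset (Fin n)).powersetCard en, ∑ U ∈ V.powersetCard dn,
          ∑ X ∈ F, if U ⊆ X ∧ X ⊆ V then 1 else 0 := by
        refine Finset.sum_congr rfl fun V _ => Finset.sum_congr rfl fun U _ => ?_
        exact Finset.card_filter _ _
    _ = ∑ V ∈ (Finset.univ : Finset (Fin n)).powersetCard en, ∑ X ∈ F,
          ∑ U ∈ V.powersetCard dn, if U ⊆ X ∧ X ⊆ V then 1 else 0 := by
        exact Finset.sum_congr rfl fun V _ => Finset.sum_comm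
    _ = ∑ X ∈ F, ∑ V ∈ (Finset.univ : Finset (Fin n)).powersetCard en,
          ∑ U ∈ V.powersetCard dn, if U ⊆ X ∧ X ⊆ V then 1 else 0 := Finset.sum_comm
    _ = ∑ X ∈ F, ∑ V ∈ (Finset.univ : Finset (Fin n)).powersetCard en,
          (if X ⊆ V then cn.choose dn else 0) := by
        refine Finset.sum_congr rfl fun X hX => Finset.sum_congr rfl fun V _ => inner X hX V
    _ = ∑ X ∈ F, cn.choose dn * (n - cn).choose (en - cn) := by
        refine Finset.sum_congr rfl fun X hX => ?_
        rw [← Finset.sum_filter, Finset.sum_const, card_supersets X cn en (hcard X hX) h2,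
          smul_eq_mul, mul_comm]
    _ = F.card * (cn.choose dn * (n - cn).choose (en - cn)) := by
        rw [Finset.sum_const, smul_eq_mul]

/-- For `1 ≥ e ≥ c` and `αc ≥ d ≥ 0` (with `cn, dn, en` integers),
`C((e−d)n,(e−c)n) · P(n,c,α) ≤ C(n,cn) · P((e−d)n, (c−d)/(e−d), (αc−d)/(c−d))`. -/
theorem stmt15 (n : ℕ) (c α e d : ℝ) (hα0 : 0 ≤ α) (hα1 : α ≤ 1) (hc0 : 0 ≤ c)
    (he1 : e ≤ 1) (hce : c ≤ e) (hd : d ≤ α * c) (hd0 : 0 ≤ d)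
    (cn dn en : ℕ) (hcn : (cn : ℝ) = c * n) (hdn : (dn : ℝ) = d * n)
    (hen : (en : ℝ) = e * n) :
    (en - dn).choose (en - cn) * maxPacking n c α ≤
      n.choose cn *
        maxPacking (en - dn) ((c - d) / (e - d)) ((α * c - d) / (c - d)) := by
  classical
  obtain ⟨F, hF, hFcard⟩ := exists_maxPacking n c α
  have hn0 : (0:ℝ) ≤ (n:ℝ) := Nat.cast_nonneg n
  have hac : α * c ≤ c := by nlinarith
  have hdc : d ≤ c := hd.trans hac
  have hdcn : dn ≤ cn := by
    have h : (dn:ℝ) ≤ (cn:ℝ) := by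
      rw [hdn, hcn]; exact mul_le_mul_of_nonneg_right hdc hn0
    exact_mod_cast h
  have hcen : cn ≤ en := by
    have h : (cn:ℝ) ≤ (en:ℝ) := by
      rw [hcn, hen]; exact mul_le_mul_of_nonneg_right hce hn0
    exact_mod_cast h
  have henn : en ≤ n := by
    have h : (en:ℝ) ≤ (n:ℝ) := by rw [hen]; nlinarith
    exact_mod_cast h
  have hXcard : ∀ X ∈ F, X.card = cn := by
    intro X hX
    have h : (X.card : ℝ) = (cn : ℝ) := by rw [hF.1 X hX, hcn]
    exact_mod_cast h
  set Q := maxPacking (en - dn) ((c - d) / (e - d)) ((α * c - d) / (c - d)) with hQ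
  have hmcast : ((en - dn : ℕ) : ℝ) = e * n - d * n := by
    rw [Nat.cast_sub (hdcn.trans hcen), hen, hdn]
  have key : ∀ V ∈ (Finset.univ : Finset (Fin n)).powersetCard en, ∀ U ∈ V.powersetCard dn,
      (F.filter (fun X => U ⊆ X ∧ X ⊆ V)).card ≤ Q := by
    intro V hV U hU
    rw [Finset.mem_powersetCard] at hV hU
    apply filter_card_le _ _ _ _ dn U V hU.1 hU.2
    · rw [Finset.card_sdiff_of_subset hU.1, hV.2, hU.2]
    · -- card condition
      intro X hX hUX hXV
      rw [hXcard X hX, Nat.cast_sub hdcn, hmcast, hcn, hdn]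
      by_cases hed : e = d
      · have hcd : c = d := le_antisymm (hce.trans_eq hed) hdc
        rw [hed, hcd]
        ring
      · have hed' : e - d ≠ 0 := sub_ne_zero.mpr hed
        field_simp
    · -- intersection condition
      intro X hX Y hY hne hUX hUY hXV hYV
      by_cases hcd : cn = dn
      · exfalso
        have hXU : U = X := Finset.eq_of_subset_of_card_le hUX
          (by rw [hXcard X hX, hU.2, hcd])
        have hYU : U = Y := Finset.eq_of_subset_of_card_le hUY
          (by rw [hXcard Y hY, hU.2, hcd])
        exact hne (hXU ▸ hYU)
      · have hdlt : (d:ℝ) * n < c * n := by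
          have h : (dn:ℝ) < (cn:ℝ) := by exact_mod_cast lt_of_le_of_ne hdcn (Ne.symm hcd)
          rw [hdn, hcn] at h; exact h
        have hnpos : (0:ℝ) < n := by nlinarith
        have hcd' : d < c := by nlinarith
        have hed' : d < e := lt_of_lt_of_le hcd' hce
        have hval : (α * c - d) / (c - d) * ((c - d) / (e - d) * ((en - dn : ℕ) : ℝ))
            = α * (c * n) - d * n := by
          rw [hmcast]
          have h1 : c - d ≠ 0 := sub_ne_zero.mpr (ne_of_gt hcd')
          have h2 : e - d ≠ 0 := sub_ne_zero.mpr (ne_of_gt hed')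
          field_simp
        rw [hval]
        have hUXY : U ⊆ X ∩ Y := Finset.subset_inter hUX hUY
        have hdnle : dn ≤ (X ∩ Y).card := hU.2 ▸ Finset.card_le_card hUXY
        have hlt := hF.2 X hX Y hY hne
        rw [Nat.cast_sub hdnle, hdn]
        linarith
  have count := double_count F cn dn en hXcard hdcn hcen
  have bound : F.card * (cn.choose dn * (n - cn).choose (en - cn))
      ≤ n.choose en * (en.choose dn * Q) := by
    rw [← count]
    calc ∑ V ∈ (Finset.univ : Finset (Fin n)).powersetCard en, ∑ U ∈ V.powersetCard dn,
          (F.filter (fun X => U ⊆ X ∧ X ⊆ V)).card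
        ≤ ∑ V ∈ (Finset.univ : Finset (Fin n)).powersetCard en, ∑ U ∈ V.powersetCard dn, Q :=
          Finset.sum_le_sum fun V hV => Finset.sum_le_sum (key V hV)
      _ = n.choose en * (en.choose dn * Q) := by
          rw [Finset.sum_congr rfl (fun V hV => ?_), Finset.sum_const, smul_eq_mul,
            Finset.card_powersetCard, Finset.card_univ, Fintype.card_fin]
          rw [Finset.sum_const, smul_eq_mul, Finset.card_powersetCard,
            (Finset.mem_powersetCard.mp hV).2]
  have hA : 0 < cn.choose dn * (n - cn).choose (en - cn) :=
    Nat.mul_pos (Nat.choose_pos hdcn) (Nat.choose_pos (by omega))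
  have hid := chooseId n cn dn en hdcn hcen henn
  have hsym : (en - dn).choose (en - cn) = (en - dn).choose (cn - dn) := by
    rw [← Nat.choose_symm (show en - cn ≤ en - dn by omega)]
    congr 1
    omega
  rw [hsym, ← hFcard]
  refine Nat.le_of_mul_le_mul_right ?_ hA
  calc (en - dn).choose (cn - dn) * F.card * (cn.choose dn * (n - cn).choose (en - cn))
      ≤ (en - dn).choose (cn - dn) * (n.choose en * (en.choose dn * Q)) := by
        rw [mul_assoc]
        exact Nat.mul_le_mul_left _ bound
    _ = n.choose en * en.choose dn * (en - dn).choose (cn - dn) * Q := by ring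
    _ = n.choose cn * cn.choose dn * (n - cn).choose (en - cn) * Q := by rw [hid]
    _ = n.choose cn * Q * (cn.choose dn * (n - cn).choose (en - cn)) := by ring
end
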